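/- arXiv:math/0112085 — 2 statements merged into one kernel-verified Lean document; each statement's English description precedes it below -/
import Mathlib

section
/- With f = ∑_{k≥20} d_k S^{M_k} w_k as above (w_k unit vectors supported on the first M_{k+1}−M_k coordinates, d_k = √(r_k² − r_{k+1}²)), if additionally r_{k+1}/d_k → 0 as k → ∞, then ‖(1/d_k) B^{M_k} f − w_k‖ → 0 as k → ∞. -/
/-!
The vectors `u k = S ^ M k (w k)` are supported in `[M k, M (k + 1))`, so they are orthonormal,
`B ^ M k` kills `u j` for `j < k`, and `B ^ M k (u k) = w k`. Hence
`(1 / d k) • B ^ M k f - w k = (1 / d k) • B ^ M k t` with `t = ∑_{j > k} d j • u j`. As `B` is a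
contraction and, by Pythagoras and telescoping, `‖t‖ ^ 2 = ∑_{j > k} d j ^ 2 ≤ r (k + 1) ^ 2`, the
error is at most `r (k + 1) / d k`.
-/

open Finset Filter
open scoped ENNReal lp

section Shift

variable {𝕜 : Type*} [NormedField 𝕜] {p : ℝ≥0∞} [Fact (1 ≤ p)]

def IsBackwardShift (B : lp (fun _ : ℕ => 𝕜) p →L[𝕜] lp (fun _ : ℕ => 𝕜) p) : Prop :=
  ∀ g n, B g n = g (n + 1)

def IsForwardShift (S : lp (fun _ : ℕ => 𝕜) p →L[𝕜] lp (fun _ : ℕ => 𝕜) p) : Prop :=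
  ∀ g, S g 0 = 0 ∧ ∀ n, S g (n + 1) = g n

variable {B S : lp (fun _ : ℕ => 𝕜) p →L[𝕜] lp (fun _ : ℕ => 𝕜) p}

theorem IsBackwardShift.pow_apply (hB : IsBackwardShift B) (a : ℕ) (g : lp (fun _ : ℕ => 𝕜) p)
    (n : ℕ) : (B ^ a) g n = g (n + a) := by
  induction a generalizing g n with
  | zero => rfl
  | succ a ih => rw [pow_succ, mul_apply_eq_comp, ih, hB, add_assoc]

theorem IsForwardShift.pow_apply (hS : IsForwardShift S) (a : ℕ) (g : lp (fun _ : ℕ => 𝕜) p)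
    (n : ℕ) : (S ^ a) g n = if n < a then 0 else g (n - a) := by
  induction a generalizing g n with
  | zero => simp
  | succ a ih =>
    rw [pow_succ', mul_apply_eq_comp]
    cases n with
    | zero => simp [(hS _).1]
    | succ n => rw [(hS _).2, ih]; simp [Nat.add_sub_add_right]

theorem IsBackwardShift.pow_apply_eq_zero (hB : IsBackwardShift B) {N a : ℕ}
    {g : lp (fun _ : ℕ => 𝕜) p} (hg : ∀ n, N ≤ n → g n = 0) (hN : N ≤ a) : (B ^ a) g = 0 := by
  ext n
  rw [hB.pow_apply, hg _ (by omega)]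
  rfl

theorem IsBackwardShift.pow_apply_forwardShift_pow (hB : IsBackwardShift B)
    (hS : IsForwardShift S) {a b : ℕ} (hab : a ≤ b) (g : lp (fun _ : ℕ => 𝕜) p) :
    (B ^ b) ((S ^ a) g) = (B ^ (b - a)) g := by
  ext n
  rw [hB.pow_apply, hS.pow_apply, hB.pow_apply, if_neg (by omega), Nat.add_sub_assoc hab]

theorem IsBackwardShift.norm_pow_apply_le (hB : IsBackwardShift B) (hp : p ≠ ∞) (a : ℕ)
    (g : lp (fun _ : ℕ => 𝕜) p) : ‖(B ^ a) g‖ ≤ ‖g‖ := by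
  have hp' : 0 < p.toReal := ENNReal.toReal_pos (zero_lt_one.trans_le Fact.out).ne' hp
  refine lp.norm_le_of_forall_sum_le hp' (norm_nonneg g) fun s => ?_
  simp only [hB.pow_apply]
  calc ∑ n ∈ s, ‖g (n + a)‖ ^ p.toReal = ∑ n ∈ s.map (addRightEmbedding a), ‖g n‖ ^ p.toReal := by
        simp
    _ ≤ ‖g‖ ^ p.toReal := lp.sum_rpow_le_norm_rpow hp' g _

theorem IsForwardShift.norm_apply (hS : IsForwardShift S) (hp : p ≠ ∞)
    (g : lp (fun _ : ℕ => 𝕜) p) : ‖S g‖ = ‖g‖ := by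
  have hp' : 0 < p.toReal := ENNReal.toReal_pos (zero_lt_one.trans_le Fact.out).ne' hp
  refine (Real.rpow_left_inj (norm_nonneg _) (norm_nonneg _) hp'.ne').1 ?_
  rw [lp.norm_rpow_eq_tsum hp', lp.norm_rpow_eq_tsum hp',
    ((lp.memℓp (S g)).summable hp').tsum_eq_zero_add]
  simp [(hS g).1, (hS g).2, Real.zero_rpow hp'.ne']

theorem IsForwardShift.norm_pow_apply (hS : IsForwardShift S) (hp : p ≠ ∞) (a : ℕ)
    (g : lp (fun _ : ℕ => 𝕜) p) : ‖(S ^ a) g‖ = ‖g‖ := by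
  induction a generalizing g with
  | zero => rfl
  | succ a ih => rw [pow_succ', mul_apply_eq_comp, hS.norm_apply hp, ih]

theorem backwardShift_pow_apply_sum_range_succ {M : ℕ → ℕ} {w : ℕ → lp (fun _ : ℕ => 𝕜) p}
    (hB : IsBackwardShift B) (hS : IsForwardShift S) (hM : Monotone M)
    (hwsupp : ∀ k n, M (k + 1) - M k ≤ n → w k n = 0) (c : ℕ → 𝕜) (k : ℕ) :
    (B ^ M k) (∑ j ∈ range (k + 1), c j • (S ^ M j) (w j)) = c k • w k := by
  have hlow : ∀ j ∈ range k, (B ^ M k) (c j • (S ^ M j) (w j)) = 0 := fun j hj => by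
    have hjk : j + 1 ≤ k := mem_range.1 hj
    rw [map_smul, hB.pow_apply_forwardShift_pow hS (hM (by omega)),
      hB.pow_apply_eq_zero (hwsupp j) (by have := hM hjk; omega), smul_zero]
  rw [map_sum, sum_range_succ, sum_eq_zero hlow, zero_add, map_smul,
    hB.pow_apply_forwardShift_pow hS le_rfl, Nat.sub_self, pow_zero]
  rfl

end Shift

theorem Orthonormal.hasSum_norm_sq {𝕜 E ι : Type*} [RCLike 𝕜] [NormedAddCommGroup E]
    [InnerProductSpace 𝕜 E] {v : ι → E} (hv : Orthonormal 𝕜 v) {c : ι → 𝕜} {x : E}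
    (hx : HasSum (fun i => c i • v i) x) : HasSum (fun i => ‖c i‖ ^ 2) (‖x‖ ^ 2) := by
  classical
  have hcoeff : ∀ i, inner 𝕜 (v i) x = c i := fun i => by
    refine ((innerSL 𝕜 (v i)).hasSum hx).unique ?_
    convert hasSum_ite_eq i (c i) using 2 with j
    rcases eq_or_ne j i with rfl | hji
    · simp [hv.1 j]
    · simp [hv.2 hji.symm, hji]
  have hterm : ∀ i, inner 𝕜 x (c i • v i) = ((‖c i‖ ^ 2 : ℝ) : 𝕜) := fun i => by
    rw [inner_smul_right, ← inner_conj_symm, hcoeff, RCLike.mul_conj]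
    norm_cast
  have hself := (innerSL 𝕜 x).hasSum hx
  simp only [innerSL_apply_apply, hterm, inner_self_eq_norm_sq_to_K] at hself
  exact_mod_cast hself

theorem lp.inner_eq_zero_of_forall_eq_zero_or {𝕜 ι : Type*} [RCLike 𝕜] {f g : ℓ²(ι, 𝕜)}
    (h : ∀ i, f i = 0 ∨ g i = 0) : inner 𝕜 f g = 0 := by
  rw [lp.inner_eq_tsum]
  convert tsum_zero with i
  rcases h i with h | h <;> simp [h]

theorem tsum_sq_le_of_sq_eq_sq_sub_sq {d r : ℕ → ℝ}
    (hdr : ∀ k, d k ^ 2 = r k ^ 2 - r (k + 1) ^ 2) (n : ℕ) : ∑' j, d (j + n) ^ 2 ≤ r n ^ 2 := by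
  refine Real.tsum_le_of_sum_range_le (fun _ => sq_nonneg _) fun N => ?_
  have htel := sum_range_sub' (fun j => r (j + n) ^ 2) N
  simp only [hdr, add_right_comm _ 1 n, zero_add] at htel ⊢
  linarith [sq_nonneg (r (N + n))]

section Orthonormal

variable {𝕜 : Type*} [RCLike 𝕜] {B S : ℓ²(ℕ, 𝕜) →L[𝕜] ℓ²(ℕ, 𝕜)} {M : ℕ → ℕ}
  {w : ℕ → ℓ²(ℕ, 𝕜)}

theorem orthonormal_forwardShift_pow (hS : IsForwardShift S) (hM : StrictMono M)
    (hw : ∀ k, ‖w k‖ = 1) (hwsupp : ∀ k n, M (k + 1) - M k ≤ n → w k n = 0) :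
    Orthonormal 𝕜 fun k => (S ^ M k) (w k) := by
  have hlt : ∀ i j, i < j → inner 𝕜 ((S ^ M i) (w i)) ((S ^ M j) (w j)) = 0 := by
    intro i j hij
    refine lp.inner_eq_zero_of_forall_eq_zero_or fun n => ?_
    simp only [hS.pow_apply]
    by_cases hn : n < M j
    · exact .inr (if_pos hn)
    · have := hM.monotone (show i + 1 ≤ j from hij)
      refine .inl ?_
      split_ifs
      · rfl
      · exact hwsupp i _ (by omega)
  refine ⟨fun k => by rw [hS.norm_pow_apply ENNReal.ofNat_ne_top, hw], fun i j hij => ?_⟩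
  rcases hij.lt_or_gt with h | h
  · exact hlt i j h
  · exact inner_eq_zero_symm.1 (hlt j i h)

theorem norm_inv_smul_backwardShift_pow_apply_sub_le (hB : IsBackwardShift B)
    (hS : IsForwardShift S) (hM : StrictMono M) (hw : ∀ k, ‖w k‖ = 1)
    (hwsupp : ∀ k n, M (k + 1) - M k ≤ n → w k n = 0) {d r : ℕ → ℝ}
    (hdr : ∀ k, d k ^ 2 = r k ^ 2 - r (k + 1) ^ 2) {f : ℓ²(ℕ, 𝕜)}
    (hf : HasSum (fun j => (d j : 𝕜) • (S ^ M j) (w j)) f) {k : ℕ} (hdk : 0 < d k)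
    (hrk : 0 ≤ r (k + 1)) :
    ‖(1 / d k : 𝕜) • (B ^ M k) f - w k‖ ≤ r (k + 1) / d k := by
  set t := f - ∑ j ∈ range (k + 1), (d j : 𝕜) • (S ^ M j) (w j)
  have htail : ‖t‖ ^ 2 = ∑' j, d (j + (k + 1)) ^ 2 := by
    have htf : HasSum
        (fun j => (d (j + (k + 1)) : 𝕜) • (S ^ M (j + (k + 1))) (w (j + (k + 1)))) t :=
      (hasSum_nat_add_iff' (k + 1)).2 hf
    have := ((orthonormal_forwardShift_pow hS hM hw hwsupp).comp _
      (add_left_injective (k + 1))).hasSum_norm_sq htf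
    simp only [RCLike.norm_ofReal, sq_abs] at this
    exact this.tsum_eq.symm
  have ht : ‖t‖ ≤ r (k + 1) := by
    refine (pow_le_pow_iff_left₀ (norm_nonneg _) hrk two_ne_zero).1 ?_
    exact htail ▸ tsum_sq_le_of_sq_eq_sq_sub_sq hdr (k + 1)
  have hBt : (B ^ M k) t = (B ^ M k) f - (d k : 𝕜) • w k := by
    rw [map_sub, backwardShift_pow_apply_sum_range_succ hB hS hM.monotone hwsupp]
  have hdk' : (d k : 𝕜) ≠ 0 := RCLike.ofReal_ne_zero.2 hdk.ne'
  have hscale : (1 / d k : 𝕜) • (B ^ M k) f - w k = (d k : 𝕜)⁻¹ • (B ^ M k) t := by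
    rw [hBt, smul_sub, smul_smul, inv_mul_cancel₀ hdk', one_smul, one_div]
  calc ‖(1 / d k : 𝕜) • (B ^ M k) f - w k‖ = ‖(B ^ M k) t‖ / d k := by
        rw [hscale, norm_smul, norm_inv, RCLike.norm_ofReal, abs_of_pos hdk, inv_mul_eq_div]
    _ ≤ r (k + 1) / d k := by
        gcongr
        exact (hB.norm_pow_apply_le ENNReal.ofNat_ne_top _ _).trans ht

end Orthonormal

theorem stmt_8_general
    (B S : lp (fun _ : ℕ => ℂ) 2 →L[ℂ] lp (fun _ : ℕ => ℂ) 2)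
    (hB : ∀ (g : lp (fun _ : ℕ => ℂ) 2) (n : ℕ), (B g : ℕ → ℂ) n = g (n + 1))
    (hS : ∀ g : lp (fun _ : ℕ => ℂ) 2,
      (S g : ℕ → ℂ) 0 = 0 ∧ ∀ n : ℕ, (S g : ℕ → ℂ) (n + 1) = g n)
    (M : ℕ → ℕ)
    (hMmono : ∀ k, 20 ≤ k → M k < M (k + 1))
    (r : ℕ → ℝ) (hrpos : ∀ k, 20 ≤ k → 0 < r k)
    (hrmono : ∀ k, 20 ≤ k → r (k + 1) < r k)
    (w : ℕ → lp (fun _ : ℕ => ℂ) 2) (hwnorm : ∀ k, 20 ≤ k → ‖w k‖ = 1)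
    (hwsupp : ∀ k, 20 ≤ k → ∀ i : ℕ, M (k + 1) - M k ≤ i → (w k : ℕ → ℂ) i = 0)
    (d : ℕ → ℝ) (hd : ∀ k, d k = Real.sqrt (r k ^ 2 - r (k + 1) ^ 2))
    (hratio : Filter.Tendsto (fun k => r (k + 1) / d k) Filter.atTop (nhds 0))
    (f : lp (fun _ : ℕ => ℂ) 2)
    (hf : HasSum (fun k : ℕ => (d (k + 20) : ℂ) • ((S ^ M (k + 20)) (w (k + 20)))) f) :
    Filter.Tendsto (fun k => ‖(1 / d k : ℂ) • ((B ^ M k) f) - w k‖)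
      Filter.atTop (nhds 0) := by
  have hshift : ∀ k, k + 1 + 20 = k + 20 + 1 := fun k => by omega
  have hM : StrictMono fun k => M (k + 20) :=
    strictMono_nat_of_lt_succ fun k => hshift k ▸ hMmono _ (by omega)
  have hsq : ∀ k, 20 ≤ k → r (k + 1) ^ 2 < r k ^ 2 := fun k hk =>
    pow_lt_pow_left₀ (hrmono k hk) (hrpos _ (by omega)).le two_ne_zero
  have hdr : ∀ k, d (k + 20) ^ 2 = r (k + 20) ^ 2 - r (k + 1 + 20) ^ 2 := fun k => by
    rw [hd, Real.sq_sqrt (by linarith [hsq (k + 20) (by omega)]), hshift]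
  have hbound : ∀ k, ‖(1 / d (k + 20) : ℂ) • (B ^ M (k + 20)) f - w (k + 20)‖
      ≤ r (k + 20 + 1) / d (k + 20) := fun k => hshift k ▸
    norm_inv_smul_backwardShift_pow_apply_sub_le (B := B) (r := fun k => r (k + 20)) hB hS hM
      (fun k => hwnorm _ (by omega)) (fun k => hshift k ▸ hwsupp _ (by omega)) hdr hf
      (by rw [hd]; exact Real.sqrt_pos.2 (by linarith [hsq (k + 20) (by omega)]))
      (hrpos _ (by omega)).le
  exact (tendsto_add_atTop_iff_nat 20).1 (squeeze_zero (fun _ => norm_nonneg _) hbound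
    ((tendsto_add_atTop_iff_nat 20).2 hratio))

theorem stmt_8
    (B S : lp (fun _ : ℕ => ℂ) 2 →L[ℂ] lp (fun _ : ℕ => ℂ) 2)
    (hB : ∀ (g : lp (fun _ : ℕ => ℂ) 2) (n : ℕ), (B g : ℕ → ℂ) n = g (n + 1))
    (hS : ∀ g : lp (fun _ : ℕ => ℂ) 2,
      (S g : ℕ → ℂ) 0 = 0 ∧ ∀ n : ℕ, (S g : ℕ → ℂ) (n + 1) = g n)
    (M : ℕ → ℕ) (hMpos : ∀ k, 20 ≤ k → 0 < M k)
    (hMmono : ∀ k, 20 ≤ k → M k < M (k + 1))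
    (r : ℕ → ℝ) (hrpos : ∀ k, 20 ≤ k → 0 < r k)
    (hrmono : ∀ k, 20 ≤ k → r (k + 1) < r k)
    (hr0 : Filter.Tendsto r Filter.atTop (nhds 0))
    (w : ℕ → lp (fun _ : ℕ => ℂ) 2) (hwnorm : ∀ k, 20 ≤ k → ‖w k‖ = 1)
    (hwsupp : ∀ k, 20 ≤ k → ∀ i : ℕ, M (k + 1) - M k ≤ i → (w k : ℕ → ℂ) i = 0)
    (d : ℕ → ℝ) (hd : ∀ k, d k = Real.sqrt (r k ^ 2 - r (k + 1) ^ 2))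
    (hratio : Filter.Tendsto (fun k => r (k + 1) / d k) Filter.atTop (nhds 0))
    (f : lp (fun _ : ℕ => ℂ) 2)
    (hf : HasSum (fun k : ℕ => (d (k + 20) : ℂ) • ((S ^ M (k + 20)) (w (k + 20)))) f) :
    Filter.Tendsto (fun k => ‖(1 / d k : ℂ) • ((B ^ M k) f) - w k‖)
      Filter.atTop (nhds 0) :=
  stmt_8_general B S hB hS M hMmono r hrpos hrmono w hwnorm hwsupp d hd hratio f hf
end

section
/- Let C > 0 and define M_k ≤ C·k·ln ln k for k ≥ 20, and let j(k) = k + 1 − ⌊n ln ln n⌋ for ⌊n ln ln n⌋ ≤ k < ⌊(n+1) ln ln(n+1)⌋. Then the series ∑_{k ≥ 20, j(k)=1} 1/M_k diverges whenever M_k > 0 satisfy M_k ≤ C·k·ln ln k; equivalently, ∑_{s≥20} 1/M_{⌊s ln ln s⌋} = ∞ under this bound. -/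
/-!
For `s ≥ 21` we have `log log s ≥ 1`, so the block starts `⌊s log log s⌋` are strictly increasing
and `j = 1` at each of them; both series therefore dominate `∑ₛ 1 / M ⌊s log log s⌋`.
Since `⌊s log log s⌋ ≤ s log s`, its `log log` is at most `2 log log s`, and `(log log s)² ≤ 4 log s`,
so `M ⌊s log log s⌋ ≤ 8 C s log s`; and `∑ 1 / (s log s)` diverges by Cauchy condensation.
-/

open Real

theorem Real.not_summable_one_div_natCast_mul_log :
    ¬ Summable fun n : ℕ => 1 / ((n : ℝ) * log n) := by
  -- Shifted by one so that `f` is antitone on `0 < n` (unshifted, `1 / (1 * log 1) = 0`).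
  set f : ℕ → ℝ := fun n => 1 / (((n : ℝ) + 1) * log ((n : ℝ) + 1))
  have hden_pos (n : ℕ) (hn : 0 < n) : 0 < ((n : ℝ) + 1) * log ((n : ℝ) + 1) := by
    have : (1 : ℝ) < n + 1 := by norm_cast; omega
    exact mul_pos (by linarith) (log_pos this)
  have hf_nonneg (n : ℕ) : 0 ≤ f n := by
    rcases Nat.eq_zero_or_pos n with rfl | hn
    · simp [f]
    · exact (one_div_pos.2 (hden_pos n hn)).le
  have hf_anti : ∀ ⦃m n : ℕ⦄, 0 < m → m ≤ n → f n ≤ f m := by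
    intro m n hm hmn
    have hmn' : (m : ℝ) + 1 ≤ n + 1 := by gcongr
    have : (1 : ℝ) ≤ m + 1 := by norm_cast; omega
    exact one_div_le_one_div_of_le (hden_pos m hm)
      (mul_le_mul hmn' (log_le_log (by linarith) hmn') (log_nonneg this) (by linarith))
  have hcondensed (k : ℕ) : 1 / (2 * log 2) * (1 / ((k : ℝ) + 1)) ≤ 2 ^ k * f (2 ^ k) := by
    have h2k : (1 : ℝ) ≤ 2 ^ k := one_le_pow₀ (by norm_num)
    have hlog : log ((2 : ℝ) ^ k + 1) ≤ (k + 1) * log 2 :=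
      calc log ((2 : ℝ) ^ k + 1) ≤ log (2 ^ (k + 1)) :=
            log_le_log (by positivity) (by rw [pow_succ]; linarith)
        _ = (k + 1) * log 2 := by rw [log_pow]; push_cast; ring
    have hpos := hden_pos (2 ^ k) (by positivity)
    push_cast at hpos
    have hlog2 : 0 < log 2 := log_pos one_lt_two
    calc 1 / (2 * log 2) * (1 / ((k : ℝ) + 1))
        = 2 ^ k / ((2 * 2 ^ k) * ((k + 1) * log 2)) := by field_simp
      _ ≤ 2 ^ k / (((2 : ℝ) ^ k + 1) * log ((2 : ℝ) ^ k + 1)) := by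
          gcongr
          · exact log_nonneg (by linarith)
          · linarith
      _ = 2 ^ k * f (2 ^ k) := by simp only [f]; push_cast; ring
  intro hsum
  have h1 := (summable_nat_add_iff 1).2 hsum
  have h2 : Summable fun k : ℕ => 1 / ((k : ℝ) + 1) := by
    have := (summable_condensed_iff_of_nonneg hf_nonneg hf_anti).2 (by simpa [f] using h1)
    exact (summable_mul_left_iff (by positivity : 1 / (2 * log 2) ≠ 0)).1
      (this.of_nonneg_of_le (fun k => by positivity) hcondensed)
  exact not_summable_one_div_natCast ((summable_nat_add_iff 1).1 (by simpa using h2))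

lemma one_le_log_log {x : ℝ} (hx : 21 ≤ x) : 1 ≤ log (log x) := by
  have he := exp_one_lt_d9
  have hexp3 : exp 3 < 21 := by
    rw [show (3 : ℝ) = 1 + 1 + 1 by norm_num, exp_add, exp_add]
    nlinarith [exp_pos 1]
  have hlog : 3 ≤ log x := (le_log_iff_exp_le (by linarith)).2 (by linarith)
  exact (le_log_iff_exp_le (by linarith)).2 (by linarith)

lemma sq_log_le_four_mul {t : ℝ} (ht : 1 ≤ t) : log t ^ 2 ≤ 4 * t := by
  have h := log_le_rpow_div (by linarith : 0 ≤ t) one_half_pos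
  rw [← sqrt_eq_rpow] at h
  nlinarith [log_nonneg ht, sqrt_nonneg t, sq_sqrt (by linarith : 0 ≤ t)]

lemma mul_log_log_le_of_le_mul_log_log {x y : ℝ} (hx : 21 ≤ x) (hy : 1 < y)
    (hyx : y ≤ x * log (log x)) : y * log (log y) ≤ 8 * x * log x := by
  set L := log (log x)
  have hL : 1 ≤ L := one_le_log_log hx
  have hlogx : 1 ≤ log x := (le_log_iff_exp_le (by linarith)).2 (by linarith [exp_one_lt_d9])
  have hlog_y : log y ≤ 2 * log x :=
    calc log y ≤ log (x * L) := log_le_log (by linarith) hyx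
      _ = log x + log L := log_mul (by positivity) (by positivity)
      _ ≤ 2 * log x := by
        linarith [log_le_self (by positivity : 0 ≤ L), log_le_self (by positivity : 0 ≤ log x)]
  have hloglog_y : log (log y) ≤ 2 * L :=
    calc log (log y) ≤ log (2 * log x) := log_le_log (log_pos hy) hlog_y
      _ = log 2 + L := log_mul two_ne_zero (by positivity)
      _ ≤ 2 * L := by linarith [log_two_lt_d9]
  calc y * log (log y) ≤ y * (2 * L) := by gcongr
    _ ≤ (x * L) * (2 * L) := by gcongr
    _ = 2 * x * L ^ 2 := by ring
    _ ≤ 2 * x * (4 * log x) := by gcongr; exact sq_log_le_four_mul hlogx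
    _ = 8 * x * log x := by ring

noncomputable def blockStart (s : ℕ) : ℕ := ⌊(s : ℝ) * log (log s)⌋₊

section blockStart

variable {s : ℕ}

lemma le_blockStart (hs : 21 ≤ s) : s ≤ blockStart s := by
  have hL := one_le_log_log (x := s) (by exact_mod_cast hs)
  exact Nat.le_floor (by nlinarith)

lemma blockStart_lt_floor_succ (hs : 21 ≤ s) :
    blockStart s < ⌊((s : ℝ) + 1) * log (log ((s : ℝ) + 1))⌋₊ := by
  have hs' : (21 : ℝ) ≤ s := by exact_mod_cast hs
  have hL := one_le_log_log hs'
  have hL_mono : log (log (s : ℝ)) ≤ log (log ((s : ℝ) + 1)) := by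
    gcongr
    · exact log_pos (by linarith)
    · linarith
  have hfloor : (blockStart s : ℝ) ≤ s * log (log s) := Nat.floor_le (by positivity)
  rw [Nat.lt_iff_add_one_le]
  exact Nat.le_floor (by push_cast; nlinarith)

lemma blockStart_mul_log_log_le (hs : 21 ≤ s) :
    (blockStart s : ℝ) * log (log (blockStart s)) ≤ 8 * s * log s := by
  have hs' : (21 : ℝ) ≤ s := by exact_mod_cast hs
  have hstart : (21 : ℝ) ≤ blockStart s := by exact_mod_cast hs.trans (le_blockStart hs)
  exact mul_log_log_le_of_le_mul_log_log hs' (by linarith)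
    (Nat.floor_le (by nlinarith [one_le_log_log hs']))

end blockStart

lemma twenty_le_blockStart_add (s : ℕ) : 20 ≤ blockStart (s + 21) :=
  (show 20 ≤ s + 21 by omega).trans (le_blockStart (by omega))

lemma strictMono_blockStart_add : StrictMono fun s => blockStart (s + 21) :=
  strictMono_nat_of_lt_succ fun s => by
    simpa [blockStart, add_right_comm] using blockStart_lt_floor_succ (s := s + 21) (by omega)

lemma not_summable_one_div_comp_blockStart {C : ℝ} (hC : 0 < C) {M : ℕ → ℝ}
    (hMpos : ∀ k, 20 ≤ k → 0 < M k)
    (hMle : ∀ k : ℕ, 20 ≤ k → M k ≤ C * k * log (log k)) :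
    ¬ Summable fun s : ℕ => 1 / M (blockStart (s + 21)) := by
  intro hsum
  have hbound (s : ℕ) :
      1 / (8 * C) * (1 / (((s + 21 : ℕ) : ℝ) * log (s + 21 : ℕ)))
        ≤ 1 / M (blockStart (s + 21)) := by
    have hstart := twenty_le_blockStart_add s
    rw [one_div_mul_one_div]
    apply one_div_le_one_div_of_le (hMpos _ hstart)
    calc M (blockStart (s + 21))
        ≤ C * (blockStart (s + 21) * log (log (blockStart (s + 21)))) := by
          rw [← mul_assoc]; exact hMle _ hstart
      _ ≤ C * (8 * (s + 21 : ℕ) * log (s + 21 : ℕ)) :=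
          mul_le_mul_of_nonneg_left (blockStart_mul_log_log_le (by omega)) hC.le
      _ = 8 * C * (((s + 21 : ℕ) : ℝ) * log (s + 21 : ℕ)) := by ring
  have hlog (s : ℕ) : 0 < log ((s + 21 : ℕ) : ℝ) := log_pos (by norm_cast; omega)
  apply not_summable_one_div_natCast_mul_log
  refine (summable_nat_add_iff 21).1
    ((summable_mul_left_iff (by positivity : 1 / (8 * C) ≠ 0)).1 ?_)
  exact hsum.of_nonneg_of_le (fun s => by have := hlog s; positivity) hbound

theorem stmt_19 (C : ℝ) (hC : 0 < C) (M : ℕ → ℝ)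
    (hMpos : ∀ k, 20 ≤ k → 0 < M k)
    (hMle : ∀ k : ℕ, 20 ≤ k → M k ≤ C * k * Real.log (Real.log k))
    (j : ℕ → ℕ)
    (hj : ∀ k, 20 ≤ k → ∀ n : ℕ,
      Nat.floor ((n : ℝ) * Real.log (Real.log n)) ≤ k →
      k < Nat.floor (((n : ℝ) + 1) * Real.log (Real.log ((n : ℝ) + 1))) →
      j k = k + 1 - Nat.floor ((n : ℝ) * Real.log (Real.log n))) :
    (¬ Summable (fun k : ℕ => if 20 ≤ k ∧ j k = 1 then 1 / M k else 0)) ∧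
    ¬ Summable (fun s : ℕ =>
      if 20 ≤ s then 1 / M (Nat.floor ((s : ℝ) * Real.log (Real.log s))) else 0) := by
  have hdiv := not_summable_one_div_comp_blockStart hC hMpos hMle
  refine ⟨fun h => hdiv ((h.comp_injective strictMono_blockStart_add.injective).congr fun s => ?_),
    fun h => hdiv (((summable_nat_add_iff 21).2 h).congr fun s => if_pos (by omega))⟩
  have hj_start : j (blockStart (s + 21)) = 1 := by
    rw [hj _ (twenty_le_blockStart_add s) (s + 21) le_rfl (blockStart_lt_floor_succ (by omega))]
    exact Nat.add_sub_self_left _ _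
  simp [twenty_le_blockStart_add s, hj_start]
end
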